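/- Let E_k (k ≥ 0) be operators satisfying [E_n, E_m] = (n−m)·E_{n+m}, and let J_q (q odd, q ≥ 1) satisfy [J_{2k+1}, E_m] = ((2k+1)/2)·J_{2k+2m+1} and [J_p, J_q] = 0 for p, q ≥ 1. Let γ_L be scalars indexed by finitely supported sequences L with |L| = ∑ i·L(i), and define V_k := −(1/2)·∑_L γ_L s^L J_{2k+2|L|+1} + E_k, where s^L are commuting formal parameters. Then [V_n, V_m] = (n−m)·V_{n+m} for all n, m ≥ 0. -/
import Mathlib


open Finsupp Finset

private lemma comm_expand {R : Type*} [Ring R] (a b e f : R) :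
    (a + e) * (b + f) - (b + f) * (a + e)
      = (a * b - b * a) + (a * f - f * a) + (e * b - b * e) + (e * f - f * e) := by
  noncomm_ring

/-- the deformed generators
`V k = −(1/2)·∑_L γ_L s^L J_{2k+2|L|+1} + E k` satisfy the Witt relations
`[V n, V m] = (n−m)·V_{n+m}`.  The (finitely many nonzero) scalars `γ_L s^L`
are packaged as a finitely supported function `c`. -/
theorem stmt16 {M : Type*} [AddCommGroup M] [Module ℝ M]
    (E J : ℕ → Module.End ℝ M)
    (hEE : ∀ n m : ℕ, E n * E m - E m * E n = ((n : ℤ) - (m : ℤ)) • E (n + m))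
    (hJE : ∀ k m : ℕ, J (2*k + 1) * E m - E m * J (2*k + 1)
        = ((2*(k:ℝ) + 1)/2) • J (2*(k + m) + 1))
    (hJJ : ∀ p q : ℕ, J (2*p + 1) * J (2*q + 1) - J (2*q + 1) * J (2*p + 1) = 0)
    (c : (ℕ →₀ ℕ) →₀ ℝ)
    (V : ℕ → Module.End ℝ M)
    (hV : ∀ k, V k = (-(1/2 : ℝ)) •
        (∑ L ∈ c.support, c L • J (2*k + 2*(L.sum fun i m => i * m) + 1)) + E k) :
    ∀ n m : ℕ, V n * V m - V m * V n = ((n : ℤ) - (m : ℤ)) • V (n + m) := by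
  set S : ℕ → Module.End ℝ M :=
    fun k => ∑ L ∈ c.support, c L • J (2*k + 2*(L.sum fun i m => i * m) + 1) with hS
  have hV' : ∀ k, V k = (-(1/2 : ℝ)) • S k + E k := fun k => hV k
  -- commutator of S with E
  have keySE : ∀ a b : ℕ, S a * E b - E b * S a
      = ∑ L ∈ c.support, (c L * ((2*((a:ℝ) + ((L.sum fun i m => i * m):ℕ)) + 1)/2)) •
          J (2*(a+b) + 2*(L.sum fun i m => i * m) + 1) := by
    intro a b
    rw [hS, Finset.sum_mul, Finset.mul_sum, ← Finset.sum_sub_distrib]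
    refine Finset.sum_congr rfl fun L _ => ?_
    rw [smul_mul_assoc, mul_smul_comm, ← smul_sub, mul_smul]
    congr 1
    have h1 : 2*a + 2*(L.sum fun i m => i * m) + 1
        = 2*(a + (L.sum fun i m => i * m)) + 1 := by ring
    have h2 : 2*((a + (L.sum fun i m => i * m)) + b) + 1
        = 2*(a+b) + 2*(L.sum fun i m => i * m) + 1 := by ring
    rw [h1, hJE (a + (L.sum fun i m => i * m)) b, h2]
    push_cast
    ring_nf
  -- S commutes with S
  have keySS : ∀ a b : ℕ, S a * S b - S b * S a = 0 := by
    intro a b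
    rw [hS, Finset.sum_mul]
    simp only [Finset.mul_sum, Finset.sum_mul, ← Finset.sum_sub_distrib]
    refine Finset.sum_eq_zero fun L _ => Finset.sum_eq_zero fun L' _ => ?_
    rw [smul_mul_assoc, smul_mul_assoc, mul_smul_comm, mul_smul_comm, smul_comm (c L') (c L),
      ← smul_sub, ← smul_sub]
    have h1 : 2*a + 2*(L.sum fun i m => i * m) + 1
        = 2*(a + (L.sum fun i m => i * m)) + 1 := by ring
    have h2 : 2*b + 2*(L'.sum fun i m => i * m) + 1
        = 2*(b + (L'.sum fun i m => i * m)) + 1 := by ring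
    rw [h1, h2, hJJ, smul_zero, smul_zero]
  intro n m
  have expand : V n * V m - V m * V n
      = ((-(1/2 : ℝ)) • S n * ((-(1/2 : ℝ)) • S m) - (-(1/2 : ℝ)) • S m * ((-(1/2 : ℝ)) • S n))
        + ((-(1/2 : ℝ)) • S n * E m - E m * ((-(1/2 : ℝ)) • S n))
        + (E n * ((-(1/2 : ℝ)) • S m) - (-(1/2 : ℝ)) • S m * E n)
        + (E n * E m - E m * E n) := by
    rw [hV' n, hV' m]
    exact comm_expand _ _ _ _
  rw [expand]
  have hSS' : (-(1/2 : ℝ)) • S n * ((-(1/2 : ℝ)) • S m)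
      - (-(1/2 : ℝ)) • S m * ((-(1/2 : ℝ)) • S n) = 0 := by
    rw [smul_mul_assoc, smul_mul_assoc, mul_smul_comm, mul_smul_comm, ← smul_sub, ← smul_sub,
      keySS, smul_zero, smul_zero]
  have hnm : (-(1/2 : ℝ)) • S n * E m - E m * ((-(1/2 : ℝ)) • S n)
      = (-(1/2 : ℝ)) • (S n * E m - E m * S n) := by
    rw [smul_mul_assoc, mul_smul_comm, smul_sub]
  have hmn : E n * ((-(1/2 : ℝ)) • S m) - (-(1/2 : ℝ)) • S m * E n
      = -((-(1/2 : ℝ)) • (S m * E n - E n * S m)) := by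
    rw [smul_mul_assoc, mul_smul_comm, smul_sub]; abel
  rw [hSS', hnm, hmn, keySE n m, keySE m n, hEE n m, hV' (n + m)]
  have hcomb : (-(1/2 : ℝ)) • (∑ L ∈ c.support,
        (c L * ((2*((n:ℝ) + ((L.sum fun i m => i * m):ℕ)) + 1)/2)) •
          J (2*(n+m) + 2*(L.sum fun i m => i * m) + 1))
      - (-(1/2 : ℝ)) • (∑ L ∈ c.support,
        (c L * ((2*((m:ℝ) + ((L.sum fun i m => i * m):ℕ)) + 1)/2)) •
          J (2*(m+n) + 2*(L.sum fun i m => i * m) + 1))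
      = ((n:ℝ) - (m:ℝ)) • ((-(1/2 : ℝ)) • S (n + m)) := by
    rw [hS, ← smul_sub, ← Finset.sum_sub_distrib, Finset.smul_sum, Finset.smul_sum,
      Finset.smul_sum]
    refine Finset.sum_congr rfl fun L _ => ?_
    have h3 : 2*(m+n) + 2*(L.sum fun i m => i * m) + 1
        = 2*(n+m) + 2*(L.sum fun i m => i * m) + 1 := by ring
    rw [h3, ← sub_smul, smul_smul, smul_smul, smul_smul]
    congr 1
    ring
  have hcast : ((n : ℤ) - (m : ℤ)) • ((-(1/2 : ℝ)) • S (n + m) + E (n + m))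
      = ((n:ℝ) - (m:ℝ)) • ((-(1/2 : ℝ)) • S (n + m)) + ((n : ℤ) - (m : ℤ)) • E (n + m) := by
    rw [smul_add]
    congr 1
    rw [← Int.cast_smul_eq_zsmul ℝ ((n:ℤ)-(m:ℤ))]
    push_cast
    ring_nf
  rw [hcast, ← hcomb]
  abel
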